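/- The formula x = c → (P(x) → P(c)), where x is a variable, c a constant of the same type, and P a unary relation symbol, is not provable in the Hilbert-style system H⊢K. -/

import Mathlib

/-- The two sorts (types) of the two-sorted term-modal language. -/
inductive TMSort : Type
  | agt | obj
deriving DecidableEq

/-- A signature for the two-sorted term-modal language. -/
structure Sig where
  Var : Type
  Con : Type
  Fn : Type
  Rel : Type
  varSort : Var → TMSort
  conSort : Con → TMSort
  deqVar : DecidableEq Var

attribute [instance] Sig.deqVar

/-- Terms: variables, constants, function applications. -/
inductive Tm (S : Sig) : Type
  | var (x : S.Var)
  | con (c : S.Con)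
  | app (f : S.Fn) (ts : List (Tm S))

/-- Formulas of term-modal logic. -/
inductive Fm (S : Sig) : Type
  | rel (P : S.Rel) (ts : List (Tm S))
  | eq (t s : Tm S)
  | neg (φ : Fm S)
  | and (φ ψ : Fm S)
  | all (x : S.Var) (φ : Fm S)
  | know (t : Tm S) (φ : Fm S)

variable {S : Sig}

/-- Substitution of variable `y` for variable `x` in a term. -/
def Tm.substT (y x : S.Var) : Tm S → Tm S
  | .var z => if z = x then .var y else .var z
  | .con c => .con c
  | .app f ts => .app f (ts.attach.map fun t => t.1.substT y x)


decreasing_by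
  have := List.sizeOf_lt_of_mem t.2
  simp only [Tm.app.sizeOf_spec]
  omega

/-- Variables occurring in a term. -/
def Tm.fvT : Tm S → List S.Var
  | .var z => [z]
  | .con _ => []
  | .app _ ts => ts.attach.flatMap fun t => t.1.fvT


decreasing_by
  have := List.sizeOf_lt_of_mem t.2
  simp only [Tm.app.sizeOf_spec]
  omega

/-- Substitution of variable `y` for free occurrences of variable `x` in a formula. -/
def Fm.substF (y x : S.Var) : Fm S → Fm S
  | .rel P ts => .rel P (ts.map (Tm.substT y x))
  | .eq t s => .eq (t.substT y x) (s.substT y x)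
  | .neg φ => .neg (φ.substF y x)
  | .and φ ψ => .and (φ.substF y x) (ψ.substF y x)
  | .all z φ => if z = x then .all z φ else .all z (φ.substF y x)
  | .know t φ => .know (t.substT y x) (φ.substF y x)

/-- Free variables of a formula. -/
def Fm.fvF : Fm S → List S.Var
  | .rel _ ts => ts.flatMap Tm.fvT
  | .eq t s => t.fvT ++ s.fvT
  | .neg φ => φ.fvF
  | .and φ ψ => φ.fvF ++ ψ.fvF
  | .all z φ => φ.fvF.filter (· ≠ z)
  | .know t φ => t.fvT ++ φ.fvF

/-- Bound (binder) variables of a formula. -/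
def Fm.bvF : Fm S → List S.Var
  | .rel _ _ => []
  | .eq _ _ => []
  | .neg φ => φ.bvF
  | .and φ ψ => φ.bvF ++ ψ.bvF
  | .all z φ => z :: φ.bvF
  | .know _ φ => φ.bvF

/-- Defined connectives. -/
def Fm.imp (φ ψ : Fm S) : Fm S := .neg (.and φ (.neg ψ))
def Fm.ex (x : S.Var) (φ : Fm S) : Fm S := .neg (.all x (.neg φ))
def Fm.neq (t s : Tm S) : Fm S := .neg (.eq t s)

/-- The diagonal (interpretation of equality) over a domain. -/
def diag (D : Type) : Set (List D) := {l | ∃ d : D, l = [d, d]}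

/-- A non-standard model: the interpretation of constants and function symbols
depends additionally on a parameter set `X ⊆ D^n` (encoded as a set of lists),
intended to be the extension of the relation symbol they occur under. -/
structure NSModel (S : Sig) where
  D : Type
  W : Type
  hW : Nonempty W
  sortOf : D → TMSort
  hAgt : ∃ d, sortOf d = TMSort.agt
  hObj : ∃ d, sortOf d = TMSort.obj
  R : D → W → W → Prop
  Jc : S.Con → W → Set (List D) → D
  hJc : ∀ c w X, sortOf (Jc c w X) = S.conSort c
  Jf : S.Fn → W → Set (List D) → List D → D
  JP : S.Rel → W → Set (List D)

/-- Extension of a term in a non-standard model, relative to world `w`,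
parameter set `X` and valuation `v`. -/
def NSModel.extT (N : NSModel S) (w : N.W) (X : Set (List N.D)) (v : S.Var → N.D) :
    Tm S → N.D
  | .var x => v x
  | .con c => N.Jc c w X
  | .app f ts => N.Jf f w X (ts.attach.map fun t => N.extT w X v t.1)


decreasing_by
  have := List.sizeOf_lt_of_mem t.2
  simp only [Tm.app.sizeOf_spec]
  omega

/-- Satisfaction in a non-standard model. -/
def NSModel.Sat (N : NSModel S) : N.W → (S.Var → N.D) → Fm S → Prop
  | w, v, .rel P ts => (ts.map fun t => N.extT w (N.JP P w) v t) ∈ N.JP P w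
  | w, v, .eq t s => N.extT w (diag N.D) v t = N.extT w (diag N.D) v s
  | w, v, .neg φ => ¬ N.Sat w v φ
  | w, v, .and φ ψ => N.Sat w v φ ∧ N.Sat w v ψ
  | w, v, .all x φ => ∀ d : N.D, N.sortOf d = S.varSort x → N.Sat w (Function.update v x d) φ
  | w, v, .know t φ => ∀ w' : N.W, N.R (N.extT w ∅ v t) w w' → N.Sat w' v φ

/-- A valuation respecting the sorts of variables. -/
def NSModel.GoodVal (N : NSModel S) (v : S.Var → N.D) : Prop :=
  ∀ x : S.Var, N.sortOf (v x) = S.varSort x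

/-- Validity in the non-standard semantics. -/
def NSValid (φ : Fm S) : Prop :=
  ∀ (N : NSModel S) (w : N.W) (v : S.Var → N.D), N.GoodVal v → N.Sat w v φ

/-- A standard (TML) model: constants and function symbols are interpreted
world-relatively (non-rigidly), over a constant domain. -/
structure TMLModel (S : Sig) where
  D : Type
  W : Type
  hW : Nonempty W
  sortOf : D → TMSort
  hAgt : ∃ d, sortOf d = TMSort.agt
  hObj : ∃ d, sortOf d = TMSort.obj
  R : D → W → W → Prop
  Ic : S.Con → W → D
  hIc : ∀ c w, sortOf (Ic c w) = S.conSort c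
  If : S.Fn → W → List D → D
  IP : S.Rel → W → Set (List D)

/-- Extension of a term in a TML model. -/
def TMLModel.extT (M : TMLModel S) (w : M.W) (v : S.Var → M.D) : Tm S → M.D
  | .var x => v x
  | .con c => M.Ic c w
  | .app f ts => M.If f w (ts.attach.map fun t => M.extT w v t.1)


decreasing_by
  have := List.sizeOf_lt_of_mem t.2
  simp only [Tm.app.sizeOf_spec]
  omega

/-- Satisfaction in a TML model. -/
def TMLModel.Sat (M : TMLModel S) : M.W → (S.Var → M.D) → Fm S → Prop
  | w, v, .rel P ts => (ts.map fun t => M.extT w v t) ∈ M.IP P w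
  | w, v, .eq t s => M.extT w v t = M.extT w v s
  | w, v, .neg φ => ¬ M.Sat w v φ
  | w, v, .and φ ψ => M.Sat w v φ ∧ M.Sat w v ψ
  | w, v, .all x φ => ∀ d : M.D, M.sortOf d = S.varSort x → M.Sat w (Function.update v x d) φ
  | w, v, .know t φ => ∀ w' : M.W, M.R (M.extT w v t) w w' → M.Sat w' v φ

def TMLModel.GoodVal (M : TMLModel S) (v : S.Var → M.D) : Prop :=
  ∀ x : S.Var, M.sortOf (v x) = S.varSort x

/-- Validity over the class of all frames in the TML semantics. -/
def TMLValid (φ : Fm S) : Prop :=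
  ∀ (M : TMLModel S) (w : M.W) (v : S.Var → M.D), M.GoodVal v → M.Sat w v φ

/-- Propositional tautology: true under every Boolean valuation of formulas
that respects negation and conjunction. -/
def Taut (φ : Fm S) : Prop :=
  ∀ b : Fm S → Prop, (∀ ψ : Fm S, b ψ.neg ↔ ¬ b ψ) →
    (∀ ψ χ : Fm S, b (ψ.and χ) ↔ b ψ ∧ b χ) → b φ

/-- The Hilbert-style system H⊢K of Liberman et al. -/
inductive Prov : Fm S → Prop
  | taut {φ : Fm S} : Taut φ → Prov φ
  | ui {x y : S.Var} {φ : Fm S} :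
      S.varSort x = S.varSort y → y ∉ φ.bvF →
      Prov (Fm.imp (.all x φ) (φ.substF y x))
  | id {t : Tm S} : Prov (.eq t t)
  | ps {x y z : S.Var} {φ : Fm S} :
      S.varSort x = S.varSort z → S.varSort y = S.varSort z →
      x ∉ φ.bvF → y ∉ φ.bvF →
      Prov (Fm.imp (.eq (.var x) (.var y)) (Fm.imp (φ.substF x z) (φ.substF y z)))
  | eid {c : S.Con} {x : S.Var} :
      S.varSort x = S.conSort c →
      Prov (Fm.imp (.eq (.con c) (.con c)) (Fm.ex x (.eq (.var x) (.con c))))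
  | dd {x y : S.Var} :
      S.varSort x ≠ S.varSort y → Prov (Fm.neq (.var x) (.var y))
  | axK {t : Tm S} {φ ψ : Fm S} :
      Prov (Fm.imp (.know t (Fm.imp φ ψ)) (Fm.imp (.know t φ) (.know t ψ)))
  | barcan {t : Tm S} {x : S.Var} {φ : Fm S} :
      x ∉ t.fvT → Prov (Fm.imp (.all x (.know t φ)) (.know t (.all x φ)))
  | kni {t : Tm S} {x y : S.Var} :
      Prov (Fm.imp (Fm.neq (.var x) (.var y)) (.know t (Fm.neq (.var x) (.var y))))
  | mp {φ ψ : Fm S} : Prov (Fm.imp φ ψ) → Prov φ → Prov ψ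
  | nec {t : Tm S} {φ : Fm S} : Prov φ → Prov (.know t φ)
  | ug {x : S.Var} {φ ψ : Fm S} :
      x ∉ φ.fvF → Prov (Fm.imp φ ψ) → Prov (Fm.imp φ (.all x ψ))


section Soundness

variable {S : Sig}

theorem Tm.substT_app (y x : S.Var) (f : S.Fn) (ts : List (Tm S)) :
    (Tm.app f ts).substT y x = .app f (ts.map (Tm.substT y x)) := by
  rw [Tm.substT]
  simp [List.attach_map_val]

theorem Tm.fvT_app (f : S.Fn) (ts : List (Tm S)) :
    (Tm.app f ts).fvT = ts.flatMap Tm.fvT := by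
  rw [Tm.fvT]
  rw [List.flatMap, List.flatMap, List.attach_map_val]

theorem NSModel.extT_app (N : NSModel S) (w : N.W) (X : Set (List N.D)) (v : S.Var → N.D)
    (f : S.Fn) (ts : List (Tm S)) :
    N.extT w X v (.app f ts) = N.Jf f w X (ts.map (N.extT w X v)) := by
  rw [NSModel.extT]
  simp [List.attach_map_val]

theorem extT_congr (N : NSModel S) (w : N.W) (X : Set (List N.D)) :
    ∀ (t : Tm S) (v v' : S.Var → N.D), (∀ z ∈ t.fvT, v z = v' z) →
      N.extT w X v t = N.extT w X v' t
  | .var z, v, v', h => by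
      rw [NSModel.extT, NSModel.extT]; exact h z (by rw [Tm.fvT]; simp)
  | .con c, _, _, _ => by rw [NSModel.extT, NSModel.extT]
  | .app f ts, v, v', h => by
      rw [N.extT_app, N.extT_app]
      congr 1
      refine List.map_congr_left ?_
      intro t ht
      exact extT_congr N w X t v v' (fun z hz => h z (by
        rw [Tm.fvT_app]; exact List.mem_flatMap.2 ⟨t, ht, hz⟩))
decreasing_by
  have := List.sizeOf_lt_of_mem ht
  simp only [Tm.app.sizeOf_spec]
  omega

theorem extT_substT (N : NSModel S) (w : N.W) (X : Set (List N.D)) (y x : S.Var) :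
    ∀ (t : Tm S) (v : S.Var → N.D),
      N.extT w X v (t.substT y x) = N.extT w X (Function.update v x (v y)) t
  | .var z, v => by
      rw [Tm.substT]
      by_cases hz : z = x <;> simp [hz, NSModel.extT, Function.update]
  | .con c, v => by rw [Tm.substT]; rw [NSModel.extT, NSModel.extT]
  | .app f ts, v => by
      rw [Tm.substT_app, N.extT_app, N.extT_app, List.map_map]
      congr 1
      refine List.map_congr_left ?_
      intro t ht
      exact extT_substT N w X y x t v
decreasing_by
  have := List.sizeOf_lt_of_mem ht
  simp only [Tm.app.sizeOf_spec]
  omega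

theorem Sat_imp (N : NSModel S) (w : N.W) (v : S.Var → N.D) (φ ψ : Fm S) :
    N.Sat w v (Fm.imp φ ψ) ↔ (N.Sat w v φ → N.Sat w v ψ) := by
  simp only [Fm.imp, NSModel.Sat]; tauto

theorem Sat_congr (N : NSModel S) :
    ∀ (φ : Fm S) (w : N.W) (v v' : S.Var → N.D), (∀ z ∈ φ.fvF, v z = v' z) →
      (N.Sat w v φ ↔ N.Sat w v' φ)
  | .rel P ts, w, v, v', h => by
      simp only [NSModel.Sat]
      have : ts.map (N.extT w (N.JP P w) v) = ts.map (N.extT w (N.JP P w) v') := by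
        refine List.map_congr_left fun t ht => extT_congr N _ _ t v v' fun z hz => h z ?_
        simp only [Fm.fvF]; exact List.mem_flatMap.2 ⟨t, ht, hz⟩
      rw [this]
  | .eq t s, w, v, v', h => by
      simp only [NSModel.Sat]
      rw [extT_congr N w (diag N.D) t v v' fun z hz => h z (by simp [Fm.fvF, hz]),
        extT_congr N w (diag N.D) s v v' fun z hz => h z (by simp [Fm.fvF, hz])]
  | .neg φ, w, v, v', h => by
      simp only [NSModel.Sat]
      rw [Sat_congr N φ w v v' h]
  | .and φ ψ, w, v, v', h => by
      simp only [NSModel.Sat]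
      rw [Sat_congr N φ w v v' fun z hz => h z (by simp [Fm.fvF, hz]),
        Sat_congr N ψ w v v' fun z hz => h z (by simp [Fm.fvF, hz])]
  | .all z φ, w, v, v', h => by
      simp only [NSModel.Sat]
      refine forall_congr' fun d => forall_congr' fun _ => ?_
      refine Sat_congr N φ w _ _ fun u hu => ?_
      by_cases huz : u = z
      · subst huz; simp
      · simp only [Function.update, dif_neg huz]
        exact h u (by simp [Fm.fvF, hu, huz])
  | .know t φ, w, v, v', h => by
      simp only [NSModel.Sat]
      rw [extT_congr N w ∅ t v v' fun z hz => h z (by simp [Fm.fvF, hz])]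
      refine forall_congr' fun w' => imp_congr Iff.rfl ?_
      exact Sat_congr N φ w' v v' fun z hz => h z (by simp [Fm.fvF, hz])

theorem Sat_substF (N : NSModel S) (y x : S.Var) :
    ∀ (φ : Fm S), y ∉ φ.bvF → ∀ (w : N.W) (v : S.Var → N.D),
      (N.Sat w v (φ.substF y x) ↔ N.Sat w (Function.update v x (v y)) φ)
  | .rel P ts, _, w, v => by
      simp only [Fm.substF, NSModel.Sat, List.map_map]
      have : ts.map (N.extT w (N.JP P w) v ∘ Tm.substT y x)
          = ts.map (N.extT w (N.JP P w) (Function.update v x (v y))) :=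
        List.map_congr_left fun t _ => extT_substT N _ _ y x t v
      rw [this]
  | .eq t s, _, w, v => by
      simp only [Fm.substF, NSModel.Sat, extT_substT]
  | .neg φ, hb, w, v => by
      simp only [Fm.substF, NSModel.Sat]
      rw [Sat_substF N y x φ hb w v]
  | .and φ ψ, hb, w, v => by
      simp only [Fm.bvF, List.mem_append] at hb
      push_neg at hb
      simp only [Fm.substF, NSModel.Sat]
      rw [Sat_substF N y x φ hb.1 w v, Sat_substF N y x ψ hb.2 w v]
  | .all z φ, hb, w, v => by
      simp only [Fm.bvF, List.mem_cons] at hb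
      push_neg at hb
      obtain ⟨hyz, hb⟩ := hb
      rw [Fm.substF]
      by_cases hzx : z = x
      · subst hzx
        simp only [if_pos rfl, NSModel.Sat]
        refine forall_congr' fun d => forall_congr' fun _ => ?_
        refine Sat_congr N φ w _ _ fun u _ => ?_
        by_cases huz : u = z <;> simp [Function.update, huz]
      · simp only [if_neg hzx, NSModel.Sat]
        refine forall_congr' fun d => forall_congr' fun _ => ?_
        rw [Sat_substF N y x φ hb w (Function.update v z d)]
        refine Sat_congr N φ w _ _ fun u _ => ?_
        rw [Function.update_comm (Ne.symm hzx)]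
        congr 1
        simp [Function.update, hyz]
  | .know t φ, hb, w, v => by
      simp only [Fm.substF, NSModel.Sat, extT_substT]
      refine forall_congr' fun w' => imp_congr Iff.rfl ?_
      exact Sat_substF N y x φ (by simpa [Fm.bvF] using hb) w' v

theorem Prov.sound {φ : Fm S} (h : Prov φ) : NSValid φ := by
  induction h with
  | @taut φ ht =>
      intro N w v _
      exact ht (N.Sat w v) (fun ψ => Iff.rfl) (fun ψ χ => Iff.rfl)
  | @ui x y φ hs hb =>
      intro N w v hv
      rw [Sat_imp]
      intro hall
      rw [Sat_substF N y x φ hb w v]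
      exact hall (v y) (by rw [hv y, hs])
  | id =>
      intro N w v _
      simp only [NSModel.Sat]
  | @ps x y z φ hxz hyz hbx hby =>
      intro N w v hv
      rw [Sat_imp]
      intro heq
      rw [Sat_imp]
      simp only [NSModel.Sat, NSModel.extT] at heq
      rw [Sat_substF N x z φ hbx w v, Sat_substF N y z φ hby w v, heq]
      exact fun hh => hh
  | @eid c x hs =>
      intro N w v hv
      rw [Sat_imp]
      intro _
      simp only [Fm.ex, NSModel.Sat]
      intro hall
      refine hall (N.Jc c w (diag N.D)) (by rw [N.hJc, hs]) ?_
      simp only [NSModel.Sat, NSModel.extT, Function.update_self]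
  | @dd x y hs =>
      intro N w v hv
      simp only [Fm.neq, NSModel.Sat, NSModel.extT]
      intro heq
      exact hs (by rw [← hv x, ← hv y, heq])
  | @axK t φ ψ =>
      intro N w v _
      rw [Sat_imp]
      intro h1
      rw [Sat_imp]
      intro h2
      simp only [NSModel.Sat]
      intro w' hr
      have := h1 w' hr
      rw [Sat_imp] at this
      exact this (h2 w' hr)
  | @barcan t x φ hx =>
      intro N w v _
      rw [Sat_imp]
      intro hall
      simp only [NSModel.Sat]
      intro w' hr d hd
      have hall' := hall d hd
      simp only [NSModel.Sat] at hall'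
      refine hall' w' ?_
      have : N.extT w ∅ (Function.update v x d) t = N.extT w ∅ v t := by
        refine extT_congr N w ∅ t _ _ fun z hz => ?_
        have : z ≠ x := fun h => hx (h ▸ hz)
        simp [Function.update, this]
      rw [this]
      exact hr
  | @kni t x y =>
      intro N w v _
      rw [Sat_imp]
      intro hne
      simp only [Fm.neq, NSModel.Sat, NSModel.extT] at hne ⊢
      intro w' _
      exact hne
  | @mp φ ψ _ _ ih1 ih2 =>
      intro N w v hv
      have := ih1 N w v hv
      rw [Sat_imp] at this
      exact this (ih2 N w v hv)
  | @nec t φ _ ih =>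
      intro N w v hv
      simp only [NSModel.Sat]
      intro w' _
      exact ih N w' v hv
  | @ug x φ ψ hx _ ih =>
      intro N w v hv
      rw [Sat_imp]
      intro hφ
      simp only [NSModel.Sat]
      intro d hd
      have hv' : N.GoodVal (Function.update v x d) := by
        intro z
        by_cases hz : z = x
        · subst hz; simpa using hd
        · simp [Function.update, hz, hv z]
      have := ih N w (Function.update v x d) hv'
      rw [Sat_imp] at this
      refine this ?_
      rw [Sat_congr N φ w (Function.update v x d) v fun z hz => ?_]
      · exact hφ
      · have : z ≠ x := fun h => hx (h ▸ hz)
        simp [Function.update, this]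

end Soundness

open Classical in
/-- The countermodel: two "agents" `(true, s)` and `(false, s)` of each sort `s`;
the constant `c` denotes `(true, conSort c)` relative to the diagonal, but
`(false, conSort c)` relative to the extension of `P`. -/
noncomputable def counterModel (S : Sig) (c : S.Con) : NSModel S where
  D := Bool × TMSort
  W := Unit
  hW := ⟨()⟩
  sortOf := Prod.snd
  hAgt := ⟨(true, .agt), rfl⟩
  hObj := ⟨(true, .obj), rfl⟩
  R := fun _ _ _ => False
  Jc := fun c' _ X =>
    if [((true : Bool), S.conSort c')] ∈ X then (false, S.conSort c') else (true, S.conSort c')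
  hJc := by
    intro c' w X
    by_cases hX : [((true : Bool), S.conSort c')] ∈ X <;> simp [hX]
  Jf := fun _ _ _ _ => (true, .obj)
  JP := fun _ _ => {[((true : Bool), S.conSort c)]}

open Classical in
theorem counterModel_Jc (S : Sig) (c c' : S.Con) (w : (counterModel S c).W)
    (X : Set (List (counterModel S c).D)) :
    (counterModel S c).Jc c' w X =
      if [((true : Bool), S.conSort c')] ∈ X then (false, S.conSort c')
      else (true, S.conSort c') := rfl

/-- the formula `x = c → (P(x) → P(c))` is not provable in H⊢K. -/
theorem stmt14 (S : Sig) (x : S.Var) (c : S.Con) (P : S.Rel)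
    (h : S.varSort x = S.conSort c) :
    ¬ Prov (Fm.imp (.eq (.var x) (.con c)) (Fm.imp (.rel P [.var x]) (.rel P [.con c]))) := by
  intro hp
  let N := counterModel S c
  have hv : N.GoodVal (fun z => ((true : Bool), S.varSort z)) := fun z => rfl
  have hsat := hp.sound N () (fun z => ((true : Bool), S.varSort z)) hv
  replace hsat := (Sat_imp _ _ _ _ _).1 hsat
  have hA : N.Sat () (fun z => ((true : Bool), S.varSort z)) (.eq (.var x) (.con c)) := by
    show N.extT () (diag N.D) _ (.var x) = N.extT () (diag N.D) _ (.con c)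
    erw [NSModel.extT, NSModel.extT]
    have hdiag : [((true : Bool), S.conSort c)] ∉ diag N.D := by
      rintro ⟨d, hd⟩
      exact List.cons_ne_nil _ _ (List.cons.inj hd).2.symm
    show ((true : Bool), S.varSort x) = N.Jc c () (diag N.D)
    erw [show N.Jc = (counterModel S c).Jc from rfl, counterModel_Jc, if_neg hdiag, h]
  have := hsat hA
  replace this := (Sat_imp _ _ _ _ _).1 this
  have hB : N.Sat () (fun z => ((true : Bool), S.varSort z)) (.rel P [.var x]) := by
    show _ ∈ N.JP P ()
    erw [List.map_cons, List.map_nil, NSModel.extT]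
    show [((true : Bool), S.varSort x)] ∈ ({[((true : Bool), S.conSort c)]} : Set (List N.D))
    rw [h]
    rfl
  have hC := this hB
  have hmem : [((true : Bool), S.conSort c)] ∈ N.JP P () := rfl
  rw [show N.Sat () (fun z => ((true : Bool), S.varSort z)) (.rel P [.con c]) =
      ([N.extT () (N.JP P ()) (fun z => ((true : Bool), S.varSort z)) (.con c)] ∈ N.JP P ())
    from by erw [NSModel.Sat, List.map_cons, List.map_nil]] at hC
  erw [NSModel.extT] at hC
  erw [show N.Jc = (counterModel S c).Jc from rfl, counterModel_Jc, if_pos hmem] at hC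
  have hfin : ([((false : Bool), S.conSort c)] : List N.D) = [((true : Bool), S.conSort c)] := hC
  injection hfin with h1 _
  exact Bool.false_ne_true (congrArg Prod.fst h1)
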